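/- If sup_k L_{ρ_k}(X_{k+1}, Z_{k+1}, A_k) < ∞, sup_k ‖A_k‖_F ≤ a, ρ_k = μᵏρ₀ with μ > 1, and f, g ≥ 0 are the fidelity and regularizer terms, then both (f(X_k)) and (g(Z_k)) are bounded sequences. -/

import Mathlib

/-! Completing the square gives `⟨A, D⟩ + (r/2)‖D‖_F² ≥ -‖A‖_F²/(2r)`, and since `ρ_k ≥ ρ₀` and
`‖A_k‖_F ≤ a` this is at least `-a²/(2ρ₀)`. Hence `f(X_{k+1}) + g(Z_{k+1})` is bounded by the bound
on the Lagrangian plus `a²/(2ρ₀)`, and each summand is bounded because both are nonnegative;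
`g ≥ 0` comes from `‖Z‖_F² = ∑ σᵢ² ≤ (∑ σᵢ)² = ‖Z‖_*²`. -/

open Matrix

variable {m n : ℕ}

/-- Singular values: square roots of the eigenvalues of `XᵀX`. -/
noncomputable def singularValues (X : Matrix (Fin m) (Fin n) ℝ) : Fin n → ℝ :=
  fun i => Real.sqrt ((show (Xᵀ * X).IsHermitian by
    simpa [Matrix.conjTranspose_eq_transpose_of_trivial] using
      Matrix.isHermitian_conjTranspose_mul_self X).eigenvalues i)

/-- Nuclear norm: the sum of the singular values. -/
noncomputable def nuclearNorm (X : Matrix (Fin m) (Fin n) ℝ) : ℝ :=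
  ∑ i, singularValues X i

/-- Frobenius norm. -/
noncomputable def frobNorm (M : Matrix (Fin m) (Fin n) ℝ) : ℝ :=
  Real.sqrt (∑ i, ∑ j, (M i j) ^ 2)

/-- Squared Frobenius norm. -/
noncomputable def frobSq (M : Matrix (Fin m) (Fin n) ℝ) : ℝ :=
  ∑ i, ∑ j, (M i j) ^ 2

/-- Trace inner product `⟨M, N⟩ = tr(MᵀN)`. -/
noncomputable def matInner (M N : Matrix (Fin m) (Fin n) ℝ) : ℝ :=
  Matrix.trace (Mᵀ * N)

lemma frobSq_nonneg (M : Matrix (Fin m) (Fin n) ℝ) : 0 ≤ frobSq M := by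
  unfold frobSq
  positivity

lemma frobSq_eq_trace (M : Matrix (Fin m) (Fin n) ℝ) : frobSq M = (Mᵀ * M).trace := by
  simp only [frobSq, Matrix.trace, Matrix.diag, Matrix.mul_apply, Matrix.transpose_apply]
  rw [Finset.sum_comm]
  simp only [pow_two]

lemma sum_sq_singularValues (M : Matrix (Fin m) (Fin n) ℝ) :
    ∑ i, singularValues M i ^ 2 = frobSq M := by
  have hH : (Mᵀ * M).IsHermitian := by
    simpa [Matrix.conjTranspose_eq_transpose_of_trivial] using
      Matrix.isHermitian_conjTranspose_mul_self M
  have hPSD : (Mᵀ * M).PosSemidef := by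
    simpa using Matrix.posSemidef_conjTranspose_mul_self M
  rw [frobSq_eq_trace, hH.trace_eq_sum_eigenvalues]
  exact Finset.sum_congr rfl fun i _ => by
    simp [singularValues, Real.sq_sqrt (hPSD.eigenvalues_nonneg i)]

lemma frobNorm_le_nuclearNorm (M : Matrix (Fin m) (Fin n) ℝ) : frobNorm M ≤ nuclearNorm M := by
  have hσ : ∀ i ∈ Finset.univ, 0 ≤ singularValues M i := fun i _ => Real.sqrt_nonneg _
  change √(frobSq M) ≤ ∑ i, singularValues M i
  rw [Real.sqrt_le_left (Finset.sum_nonneg hσ), ← sum_sq_singularValues]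
  exact Finset.sum_sq_le_sq_sum_of_nonneg hσ

lemma regularizer_nonneg {lam α : ℝ} (hlam : 0 ≤ lam) (hα : α ≤ 1)
    (M : Matrix (Fin m) (Fin n) ℝ) : 0 ≤ lam * (nuclearNorm M - α * frobNorm M) := by
  have hF : 0 ≤ frobNorm M := Real.sqrt_nonneg _
  have : α * frobNorm M ≤ nuclearNorm M :=
    (mul_le_of_le_one_left hF hα).trans (frobNorm_le_nuclearNorm M)
  exact mul_nonneg hlam (sub_nonneg.mpr this)

lemma matInner_eq_sum (A D : Matrix (Fin m) (Fin n) ℝ) :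
    matInner A D = ∑ i, ∑ j, A i j * D i j := by
  simp only [matInner, Matrix.trace, Matrix.diag, Matrix.mul_apply, Matrix.transpose_apply]
  exact Finset.sum_comm

/-- Completing the square entrywise: `a d + r d² / 2 = (a + r d)² / (2r) - a² / (2r)`. -/
lemma neg_frobSq_div_le_matInner_add {r : ℝ} (hr : 0 < r) (A D : Matrix (Fin m) (Fin n) ℝ) :
    -(frobSq A / (2 * r)) ≤ matInner A D + r / 2 * frobSq D := by
  simp only [matInner_eq_sum, frobSq, Finset.mul_sum, Finset.sum_div, ← Finset.sum_neg_distrib,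
    ← Finset.sum_add_distrib]
  gcongr with i _ j _
  have hsq : A i j * D i j + r / 2 * D i j ^ 2 + A i j ^ 2 / (2 * r) =
      (A i j + r * D i j) ^ 2 / (2 * r) := by
    field_simp
    ring
  have : 0 ≤ (A i j + r * D i j) ^ 2 / (2 * r) := by positivity
  linarith

lemma neg_sq_div_le_matInner_add {ρ₀ r a : ℝ} (hρ₀ : 0 < ρ₀) (hr : ρ₀ ≤ r)
    {A : Matrix (Fin m) (Fin n) ℝ} (hA : frobNorm A ≤ a) (D : Matrix (Fin m) (Fin n) ℝ) :
    -(a ^ 2 / (2 * ρ₀)) ≤ matInner A D + r / 2 * frobSq D := by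
  have hA2 : frobSq A ≤ a ^ 2 := by
    rw [← Real.sq_sqrt (frobSq_nonneg A)]
    exact pow_le_pow_left₀ (Real.sqrt_nonneg _) hA 2
  have : frobSq A / (2 * r) ≤ a ^ 2 / (2 * ρ₀) :=
    div_le_div₀ ((frobSq_nonneg A).trans hA2) hA2 (by positivity) (by linarith)
  linarith [neg_frobSq_div_le_matInner_add (hρ₀.trans_le hr) A D]

theorem fidelity_and_regularizer_bounded_general
    (W : Matrix (Fin m) (Fin m) ℝ) (Y : Matrix (Fin m) (Fin n) ℝ)
    (lam α μ ρ₀ a : ℝ) (hlam : 0 < lam) (hα1 : α ≤ 1)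
    (hμ : 1 < μ) (hρ₀ : 0 < ρ₀)
    (ρ : ℕ → ℝ) (hρ : ∀ k, ρ k = μ ^ k * ρ₀)
    (X Z A : ℕ → Matrix (Fin m) (Fin n) ℝ)
    (f : Matrix (Fin m) (Fin n) ℝ → ℝ) (g : Matrix (Fin m) (Fin n) ℝ → ℝ)
    (hf : ∀ M, f M = frobSq (W * (Y - M)))
    (hg : ∀ M, g M = lam * (nuclearNorm M - α * frobNorm M))
    (L : ℝ → Matrix (Fin m) (Fin n) ℝ → Matrix (Fin m) (Fin n) ℝ →
      Matrix (Fin m) (Fin n) ℝ → ℝ)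
    (hL : ∀ r Xm Zm Am, L r Xm Zm Am =
      f Xm + g Zm + matInner Am (Xm - Zm) + (r / 2) * frobSq (Xm - Zm))
    (hLbdd : ∃ B, ∀ k, L (ρ k) (X (k + 1)) (Z (k + 1)) (A k) ≤ B)
    (hAbdd : ∀ k, frobNorm (A k) ≤ a) :
    (∃ Bf, ∀ k, f (X (k + 1)) ≤ Bf) ∧ (∃ Bg, ∀ k, g (Z (k + 1)) ≤ Bg) := by
  obtain ⟨B, hB⟩ := hLbdd
  have hρ₀_le : ∀ k, ρ₀ ≤ ρ k := fun k =>
    (hρ k).symm ▸ le_mul_of_one_le_left hρ₀.le (one_le_pow₀ hμ.le)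
  have hsum : ∀ k, f (X (k + 1)) + g (Z (k + 1)) ≤ B + a ^ 2 / (2 * ρ₀) := fun k => by
    have hLk := hB k
    rw [hL] at hLk
    linarith [neg_sq_div_le_matInner_add hρ₀ (hρ₀_le k) (hAbdd k) (X (k + 1) - Z (k + 1))]
  have hf0 : ∀ M, 0 ≤ f M := fun M => (hf M).symm ▸ frobSq_nonneg _
  have hg0 : ∀ M, 0 ≤ g M := fun M => (hg M).symm ▸ regularizer_nonneg hlam.le hα1 M
  exact ⟨⟨B + a ^ 2 / (2 * ρ₀), fun k => by linarith [hsum k, hg0 (Z (k + 1))]⟩,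
    ⟨B + a ^ 2 / (2 * ρ₀), fun k => by linarith [hsum k, hf0 (X (k + 1))]⟩⟩

/-- If the augmented Lagrangian values `L_{ρ_k}(X_{k+1}, Z_{k+1}, A_k)` are bounded
above, the multipliers are bounded (`‖A_k‖_F ≤ a`), `ρ_k = μᵏρ₀` with `μ > 1`, and
`f(X) = ‖W(Y − X)‖_F² ≥ 0`, `g(Z) = λ(‖Z‖_* − α‖Z‖_F) ≥ 0` (with `λ > 0`, `0 ≤ α ≤ 1`),
then both sequences `(f(X_k))` and `(g(Z_k))` are bounded. -/
theorem fidelity_and_regularizer_bounded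
    (W : Matrix (Fin m) (Fin m) ℝ) (Y : Matrix (Fin m) (Fin n) ℝ)
    (lam α μ ρ₀ a : ℝ) (hlam : 0 < lam) (hα0 : 0 ≤ α) (hα1 : α ≤ 1)
    (hμ : 1 < μ) (hρ₀ : 0 < ρ₀)
    (ρ : ℕ → ℝ) (hρ : ∀ k, ρ k = μ ^ k * ρ₀)
    (X Z A : ℕ → Matrix (Fin m) (Fin n) ℝ)
    (f : Matrix (Fin m) (Fin n) ℝ → ℝ) (g : Matrix (Fin m) (Fin n) ℝ → ℝ)
    (hf : ∀ M, f M = frobSq (W * (Y - M)))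
    (hg : ∀ M, g M = lam * (nuclearNorm M - α * frobNorm M))
    (L : ℝ → Matrix (Fin m) (Fin n) ℝ → Matrix (Fin m) (Fin n) ℝ →
      Matrix (Fin m) (Fin n) ℝ → ℝ)
    (hL : ∀ r Xm Zm Am, L r Xm Zm Am =
      f Xm + g Zm + matInner Am (Xm - Zm) + (r / 2) * frobSq (Xm - Zm))
    (hupd : ∀ k, A (k + 1) = A k + ρ k • (X (k + 1) - Z (k + 1)))
    (hLbdd : ∃ B, ∀ k, L (ρ k) (X (k + 1)) (Z (k + 1)) (A k) ≤ B)
    (hAbdd : ∀ k, frobNorm (A k) ≤ a) :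
    (∃ Bf, ∀ k, f (X (k + 1)) ≤ Bf) ∧ (∃ Bg, ∀ k, g (Z (k + 1)) ≤ Bg) :=
  fidelity_and_regularizer_bounded_general W Y lam α μ ρ₀ a hlam hα1 hμ hρ₀ ρ hρ X Z A f g hf hg L
    hL hLbdd hAbdd
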